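/- arXiv:1806.04125 — 2 statements merged into one kernel-verified Lean document; each statement's English description precedes it below -/
import Mathlib

section
/- Let W' be the extended affine Weyl group of type D_{n+1} acting on ℝ^{n+1}, and let σ be the involution of ℝ^{n+1} given by e_{n+1} ↦ -e_{n+1} and fixing e_1, ..., e_n. Then the subgroup of elements of W' commuting with σ, restricted to the fixed subspace E = span(e_1,...,e_n), is isomorphic (via restriction) to the extended affine Weyl group W_e of type B_n acting on E. -/
open Finset

/-- A signed permutation of `ℝᵐ` (Weyl group of type B). -/
def IsSignedPermMap (m : ℕ) (w : (Fin m → ℝ) → (Fin m → ℝ)) : Prop :=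
  ∃ (π : Equiv.Perm (Fin m)) (ε : Fin m → ℝ),
    (∀ i, ε i = 1 ∨ ε i = -1) ∧ ∀ x i, w x i = ε i * x (π i)

/-- A signed permutation of `ℝᵐ` with an even number of sign changes
(Weyl group of type D). -/
def IsEvenSignedPermMap (m : ℕ) (w : (Fin m → ℝ) → (Fin m → ℝ)) : Prop :=
  ∃ (π : Equiv.Perm (Fin m)) (ε : Fin m → ℝ),
    (∀ i, ε i = 1 ∨ ε i = -1) ∧
    Even (univ.filter (fun i => ε i = -1)).card ∧
    ∀ x i, w x i = ε i * x (π i)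

/-- The extended affine Weyl group of type Bₙ acting on `ℝⁿ`:
signed permutations composed with translations by `ℤⁿ`. -/
def ExtAffWeylB (n : ℕ) : Set ((Fin n → ℝ) → (Fin n → ℝ)) :=
  {f | ∃ (w : (Fin n → ℝ) → (Fin n → ℝ)) (lam : Fin n → ℤ),
    IsSignedPermMap n w ∧ ∀ x i, f x i = w x i + (lam i : ℝ)}

/-- The extended affine Weyl group of type D_{n+1} acting on `ℝ^{n+1}` (for the adjoint
group): even signed permutations composed with translations by `ℤ^{n+1}`. -/
def ExtAffWeylD (n : ℕ) : Set ((Fin (n + 1) → ℝ) → (Fin (n + 1) → ℝ)) :=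
  {f | ∃ (w : (Fin (n + 1) → ℝ) → (Fin (n + 1) → ℝ)) (lam : Fin (n + 1) → ℤ),
    IsEvenSignedPermMap (n + 1) w ∧ ∀ x i, f x i = w x i + (lam i : ℝ)}

/-- Restriction of a map on `ℝ^{n+1}` to the σ-fixed subspace `E = ℝⁿ`
(first `n` coordinates), embedding `E` by extending with last coordinate `0`. -/
def resE (n : ℕ) (f : (Fin (n + 1) → ℝ) → (Fin (n + 1) → ℝ)) :
    (Fin n → ℝ) → (Fin n → ℝ) :=
  fun x i => f (Fin.snoc x 0) i.castSucc


/-!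
An element `x ↦ ε • (x ∘ π) + λ` of the type-D group commutes with the reflection `σ` in the
last coordinate exactly when `π` fixes the last index and `λ` vanishes there. Such an element
preserves `E` and restricts to the type-B element with the first `n` signs, permutation and
translation; the last sign is lost, but it is determined by the evenness of the number of
sign changes. This gives injectivity, and choosing that sign gives surjectivity.
-/

open Equiv

lemma ne_zero_of_eq_one_or_eq_neg_one {s : ℝ} (hs : s = 1 ∨ s = -1) : s ≠ 0 := by
  rcases hs with rfl | rfl <;> norm_num

def signedPermAffine {m : ℕ} (π : Perm (Fin m)) (ε : Fin m → ℝ) (a : Fin m → ℤ) :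
    (Fin m → ℝ) → Fin m → ℝ :=
  fun x i => ε i * x (π i) + a i

lemma mem_extAffWeylB_iff {n : ℕ} {g : (Fin n → ℝ) → Fin n → ℝ} :
    g ∈ ExtAffWeylB n ↔
      ∃ π ε a, (∀ i, ε i = 1 ∨ ε i = -1) ∧ g = signedPermAffine π ε a := by
  constructor
  · rintro ⟨w, a, ⟨π, ε, hε, hw⟩, hg⟩
    exact ⟨π, ε, a, hε, funext₂ fun x i => by rw [hg, hw]; rfl⟩
  · rintro ⟨π, ε, a, hε, rfl⟩
    exact ⟨fun x i => ε i * x (π i), a, ⟨π, ε, hε, fun _ _ => rfl⟩, fun _ _ => rfl⟩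

lemma mem_extAffWeylD_iff {n : ℕ} {f : (Fin (n + 1) → ℝ) → Fin (n + 1) → ℝ} :
    f ∈ ExtAffWeylD n ↔
      ∃ π ε a, (∀ i, ε i = 1 ∨ ε i = -1) ∧ Even #{i | ε i = -1} ∧
        f = signedPermAffine π ε a := by
  constructor
  · rintro ⟨w, a, ⟨π, ε, hε, hpar, hw⟩, hf⟩
    exact ⟨π, ε, a, hε, hpar, funext₂ fun x i => by rw [hf, hw]; rfl⟩
  · rintro ⟨π, ε, a, hε, hpar, rfl⟩
    exact ⟨fun x i => ε i * x (π i), a, ⟨π, ε, hε, hpar, fun _ _ => rfl⟩, fun _ _ => rfl⟩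

lemma signedPermAffine_inj {m : ℕ} {π π' : Perm (Fin m)} {ε ε' : Fin m → ℝ}
    {a a' : Fin m → ℤ} (hε : ∀ i, ε i ≠ 0)
    (h : signedPermAffine π ε a = signedPermAffine π' ε' a') :
    π = π' ∧ ε = ε' ∧ a = a' := by
  have happly (x : Fin m → ℝ) (i : Fin m) : ε i * x (π i) + a i = ε' i * x (π' i) + a' i :=
    congrFun₂ h x i
  have ha : a = a' := funext fun i => by exact_mod_cast by simpa using happly 0 i
  subst ha
  have hπε (i) : π' i = π i ∧ ε i = ε' i := by
    have := happly (Pi.single (π i) 1) i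
    by_cases hi : π' i = π i
    · simp_all
    · simp [hi, hε i] at this
  exact ⟨Perm.ext fun i => (hπε i).1.symm, funext fun i => (hπε i).2, rfl⟩

def negLast (n : ℕ) (x : Fin (n + 1) → ℝ) : Fin (n + 1) → ℝ :=
  fun i => if i = Fin.last n then -x i else x i

lemma signedPermAffine_comp_negLast_comm_iff {n : ℕ} {π : Perm (Fin (n + 1))}
    {ε : Fin (n + 1) → ℝ} {a : Fin (n + 1) → ℤ} (hε : ∀ i, ε i ≠ 0) :
    signedPermAffine π ε a ∘ negLast n = negLast n ∘ signedPermAffine π ε a ↔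
      π (Fin.last n) = Fin.last n ∧ a (Fin.last n) = 0 := by
  constructor
  · intro h
    have happly (x i) := congrFun₂ h x i
    simp only [Function.comp_apply, signedPermAffine, negLast] at happly
    constructor
    · by_contra hπ
      have hne : π.symm (Fin.last n) ≠ Fin.last n := fun h' => hπ (π.symm_apply_eq.mp h').symm
      have := happly 1 (π.symm (Fin.last n))
      simp only [apply_symm_apply, ↓reduceIte, Pi.one_apply, mul_neg, mul_one, hne,
        add_left_inj] at this
      exact hε _ (by linarith)
    · have := happly 0 (Fin.last n)
      simp only [Pi.zero_apply, neg_zero, ite_self, mul_zero, zero_add, ↓reduceIte] at this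
      exact_mod_cast (by linarith : (a (Fin.last n) : ℝ) = 0)
  · rintro ⟨hπ, ha⟩
    funext x i
    simp only [Function.comp_apply, signedPermAffine, negLast]
    by_cases hi : i = Fin.last n
    · subst hi; simp [hπ, ha]
    · have : π i ≠ Fin.last n := by rwa [← hπ, π.injective.ne_iff]
      simp [hi, this]

def Equiv.Perm.extendLast {n : ℕ} (τ : Perm (Fin n)) : Perm (Fin (n + 1)) :=
  finSuccEquivLast.symm.permCongr τ.optionCongr

@[simp]
lemma Equiv.Perm.extendLast_castSucc {n : ℕ} (τ : Perm (Fin n)) (i : Fin n) :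
    τ.extendLast i.castSucc = (τ i).castSucc := by
  simp [Perm.extendLast, permCongr_apply, finSuccEquivLast_castSucc, finSuccEquivLast_symm_some]

@[simp]
lemma Equiv.Perm.extendLast_last {n : ℕ} (τ : Perm (Fin n)) :
    τ.extendLast (Fin.last n) = Fin.last n := by
  simp [Perm.extendLast, permCongr_apply]

lemma Equiv.Perm.exists_eq_extendLast {n : ℕ} {π : Perm (Fin (n + 1))}
    (hπ : π (Fin.last n) = Fin.last n) : ∃ τ : Perm (Fin n), π = τ.extendLast := by
  set p := finSuccEquivLast.permCongr π
  have hp : p none = none := by simp [p, permCongr_apply, hπ]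
  have hpτ : p = (removeNone p).optionCongr := by
    ext1 x
    cases x with
    | none => simp [hp]
    | some i =>
      have hsome : p (some i) ≠ none := by rw [← hp]; simp
      exact (removeNone_some p (Option.ne_none_iff_exists'.mp hsome)).symm
  refine ⟨removeNone p, ?_⟩
  rw [Perm.extendLast, ← hpτ, ← permCongr_symm, symm_apply_apply]

lemma card_filter_snoc {α : Type*} {n : ℕ} (v : Fin n → α) (s : α) (p : α → Prop)
    [DecidablePred p] :
    #{i | p ((Fin.snoc v s : Fin (n + 1) → α) i)} = #{i | p (v i)} + if p s then 1 else 0 := by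
  simp only [card_filter, Fin.sum_univ_castSucc, Fin.snoc_castSucc, Fin.snoc_last]

lemma existsUnique_sign_even_card_snoc {n : ℕ} (ε : Fin n → ℝ) :
    ∃! s : ℝ, (s = 1 ∨ s = -1) ∧ Even #{i | (Fin.snoc ε s : Fin (n + 1) → ℝ) i = -1} := by
  simp only [card_filter_snoc ε _ (· = -1)]
  by_cases hk : Even #{i | ε i = -1}
  · refine ⟨1, ⟨.inl rfl, by norm_num [hk]⟩, ?_⟩
    rintro s ⟨rfl | rfl, hs⟩
    · rfl
    · simp [Nat.even_add_one, hk] at hs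
  · refine ⟨-1, ⟨.inr rfl, by simp [Nat.even_add_one, hk]⟩, ?_⟩
    rintro s ⟨rfl | rfl, hs⟩
    · norm_num [hk] at hs
    · rfl

lemma resE_signedPermAffine_extendLast {n : ℕ} (τ : Perm (Fin n)) (ε : Fin n → ℝ)
    (a : Fin n → ℤ) (s : ℝ) :
    resE n (signedPermAffine τ.extendLast (Fin.snoc ε s) (Fin.snoc a 0)) =
      signedPermAffine τ ε a := by
  funext x i
  simp [resE, signedPermAffine]

lemma eq_signedPermAffine_extendLast_of_comm_negLast {n : ℕ}
    {f : (Fin (n + 1) → ℝ) → Fin (n + 1) → ℝ} (hf : f ∈ ExtAffWeylD n)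
    (hfσ : f ∘ negLast n = negLast n ∘ f) :
    ∃ τ ε a s, (∀ i, ε i = 1 ∨ ε i = -1) ∧ (s = 1 ∨ s = -1) ∧
      Even #{i | (Fin.snoc ε s : Fin (n + 1) → ℝ) i = -1} ∧
      f = signedPermAffine (Perm.extendLast τ) (Fin.snoc ε s) (Fin.snoc a 0) := by
  obtain ⟨π, ε, a, hε, hpar, rfl⟩ := mem_extAffWeylD_iff.mp hf
  obtain ⟨hπ, ha⟩ :=
    (signedPermAffine_comp_negLast_comm_iff (ne_zero_of_eq_one_or_eq_neg_one <| hε ·)).mp hfσ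
  obtain ⟨τ, rfl⟩ := Perm.exists_eq_extendLast hπ
  refine ⟨τ, Fin.init ε, Fin.init a, ε (Fin.last n), fun i => hε _, hε _, ?_, ?_⟩ <;>
    rw [Fin.snoc_init_self]
  · exact hpar
  · rw [← ha, Fin.snoc_init_self]

lemma resE_mem_extAffWeylB {n : ℕ} {f : (Fin (n + 1) → ℝ) → Fin (n + 1) → ℝ}
    (hf : f ∈ ExtAffWeylD n) (hfσ : f ∘ negLast n = negLast n ∘ f) :
    resE n f ∈ ExtAffWeylB n := by
  obtain ⟨τ, ε, a, s, hε, -, -, rfl⟩ := eq_signedPermAffine_extendLast_of_comm_negLast hf hfσ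
  rw [resE_signedPermAffine_extendLast]
  exact mem_extAffWeylB_iff.mpr ⟨τ, ε, a, hε, rfl⟩

lemma injOn_resE (n : ℕ) :
    Set.InjOn (resE n) {f ∈ ExtAffWeylD n | f ∘ negLast n = negLast n ∘ f} := by
  rintro f ⟨hf, hfσ⟩ f' ⟨hf', hf'σ⟩ hres
  obtain ⟨τ, ε, a, s, hε, hs, hpar, rfl⟩ := eq_signedPermAffine_extendLast_of_comm_negLast hf hfσ
  obtain ⟨τ', ε', a', s', -, hs', hpar', rfl⟩ :=
    eq_signedPermAffine_extendLast_of_comm_negLast hf' hf'σ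
  simp only [resE_signedPermAffine_extendLast] at hres
  obtain ⟨rfl, rfl, rfl⟩ :=
    signedPermAffine_inj (ne_zero_of_eq_one_or_eq_neg_one <| hε ·) hres
  rw [(existsUnique_sign_even_card_snoc ε).unique ⟨hs, hpar⟩ ⟨hs', hpar'⟩]

lemma exists_resE_eq {n : ℕ} {g : (Fin n → ℝ) → Fin n → ℝ} (hg : g ∈ ExtAffWeylB n) :
    ∃ f ∈ ExtAffWeylD n, f ∘ negLast n = negLast n ∘ f ∧ resE n f = g := by
  obtain ⟨τ, ε, a, hε, rfl⟩ := mem_extAffWeylB_iff.mp hg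
  obtain ⟨s, ⟨hs, hpar⟩, -⟩ := existsUnique_sign_even_card_snoc ε
  have hsign (i) : (Fin.snoc ε s : Fin (n + 1) → ℝ) i = 1 ∨
      (Fin.snoc ε s : Fin (n + 1) → ℝ) i = -1 := by
    induction i using Fin.lastCases <;> simp [hs, hε]
  refine ⟨_, mem_extAffWeylD_iff.mpr ⟨_, _, _, hsign, hpar, rfl⟩, ?_,
    resE_signedPermAffine_extendLast τ ε a s⟩
  exact (signedPermAffine_comp_negLast_comm_iff (ne_zero_of_eq_one_or_eq_neg_one <| hsign ·)).mpr
    ⟨by simp, by simp⟩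

lemma apply_snoc_zero_of_comm_negLast {n : ℕ} {h : (Fin (n + 1) → ℝ) → Fin (n + 1) → ℝ}
    (hσ : h ∘ negLast n = negLast n ∘ h) (x : Fin n → ℝ) :
    h (Fin.snoc x 0) = Fin.snoc (resE n h x) 0 := by
  have hfix : negLast n (Fin.snoc x 0) = Fin.snoc x 0 := by
    funext j; by_cases hj : j = Fin.last n <;> simp [negLast, hj]
  have hlast : h (Fin.snoc x 0) (Fin.last n) = 0 := by
    have := congrFun (congrFun hσ (Fin.snoc x 0)) (Fin.last n)
    simp only [Function.comp_apply, hfix, negLast, if_pos] at this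
    linarith
  funext j
  induction j using Fin.lastCases with
  | last => simpa using hlast
  | cast i => simp [resE]

lemma resE_comp {n : ℕ} (f : (Fin (n + 1) → ℝ) → Fin (n + 1) → ℝ)
    {h : (Fin (n + 1) → ℝ) → Fin (n + 1) → ℝ} (hσ : h ∘ negLast n = negLast n ∘ h) :
    resE n (f ∘ h) = resE n f ∘ resE n h := by
  funext x i
  simp only [resE, Function.comp_apply, apply_snoc_zero_of_comm_negLast hσ]

theorem stmt7_general (n : ℕ)
    (σ : (Fin (n + 1) → ℝ) → (Fin (n + 1) → ℝ))
    (hσ : ∀ x i, σ x i = if i = Fin.last n then -x i else x i) :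
    (∀ f ∈ ExtAffWeylD n, f ∘ σ = σ ∘ f → resE n f ∈ ExtAffWeylB n) ∧
    Set.InjOn (resE n) {f ∈ ExtAffWeylD n | f ∘ σ = σ ∘ f} ∧
    (∀ g ∈ ExtAffWeylB n, ∃ f ∈ ExtAffWeylD n, f ∘ σ = σ ∘ f ∧ resE n f = g) ∧
    (∀ f ∈ ExtAffWeylD n, ∀ h ∈ ExtAffWeylD n, f ∘ σ = σ ∘ f → h ∘ σ = σ ∘ h →
      resE n (f ∘ h) = resE n f ∘ resE n h) := by
  obtain rfl : σ = negLast n := funext₂ hσ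
  exact ⟨fun _ hf hfσ => resE_mem_extAffWeylB hf hfσ, injOn_resE n,
    fun _ hg => exists_resE_eq hg, fun f _ _ _ _ hhσ => resE_comp f hhσ⟩

/-- for `σ : ℝ^{n+1} → ℝ^{n+1}` negating the last coordinate, the
restriction map `w ↦ w|_E` is a group isomorphism from the set of elements of the
extended affine Weyl group of type D_{n+1} commuting with `σ` onto the extended affine
Weyl group of type Bₙ acting on `E`: it lands in `W_e(Bₙ)`, is injective, surjective,
and respects composition. -/
theorem stmt7 (n : ℕ) (hn : 1 ≤ n)
    (σ : (Fin (n + 1) → ℝ) → (Fin (n + 1) → ℝ))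
    (hσ : ∀ x i, σ x i = if i = Fin.last n then -x i else x i) :
    (∀ f ∈ ExtAffWeylD n, f ∘ σ = σ ∘ f → resE n f ∈ ExtAffWeylB n) ∧
    Set.InjOn (resE n) {f ∈ ExtAffWeylD n | f ∘ σ = σ ∘ f} ∧
    (∀ g ∈ ExtAffWeylB n, ∃ f ∈ ExtAffWeylD n, f ∘ σ = σ ∘ f ∧ resE n f = g) ∧
    (∀ f ∈ ExtAffWeylD n, ∀ h ∈ ExtAffWeylD n, f ∘ σ = σ ∘ f → h ∘ σ = σ ∘ h →
      resE n (f ∘ h) = resE n f ∘ resE n h) :=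
  stmt7_general n σ hσ
end

section
/- Let k₀ be a field, k/k₀ a quadratic extension. Embed T_k = k^×/k₀^× into PGL₂(k₀) via the action of k^× on k ≅ k₀² by multiplication (in a fixed basis). Let B̄ be the image in PGL₂(k₀) of the lower triangular matrices. Then PGL₂(k₀) = T_k · B̄, and T_k ∩ B̄ is trivial. -/
/-!
Multiplication by `k^×` on `k ≅ k₀²` acts on the lines of `k`, that is on `P¹(k₀)`, and the
lower triangular matrices form the stabiliser of the line `k₀ · B 1`, the span of the second
basis vector. The action is transitive, since any nonzero `w` equals `x · B 1` for
`x = w / B 1`, so every `g` factors as `ρ(x) · b` with `ρ(x)` and `g` agreeing on `B 1`.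
It is free modulo `k₀^×`: if `ρ(x)` stabilises `k₀ · B 1`, then `x · B 1 ∈ k₀ · B 1`, so `x ∈ k₀`.
-/

open Matrix

namespace Algebra

variable {k₀ k ι : Type*} [Field k₀] [DivisionRing k] [Algebra k₀ k] [Fintype ι] [DecidableEq ι]
  (B : Module.Basis ι k₀ k)

theorem leftMulMatrix_col (x : k) (j : ι) :
    (leftMulMatrix B x).col j = B.repr (x * B j) := by
  ext i
  exact leftMulMatrix_eq_repr_mul B x i j

theorem exists_leftMulMatrix_col_eq {v : ι → k₀} (hv : v ≠ 0) (j : ι) :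
    ∃ x : kˣ, (leftMulMatrix B (x : k)).col j = v := by
  set w : k := B.equivFun.symm v
  have hw : w ≠ 0 := B.equivFun.symm.map_ne_zero_iff.mpr hv
  refine ⟨Units.mk0 (w * (B j)⁻¹) (mul_ne_zero hw (inv_ne_zero (B.ne_zero j))), ?_⟩
  rw [leftMulMatrix_col, Units.val_mk0, inv_mul_cancel_right₀ (B.ne_zero j)]
  exact B.equivFun.apply_symm_apply v

theorem mem_range_algebraMap_of_leftMulMatrix_eq_zero {x : k} {j : ι}
    (hx : ∀ i ≠ j, leftMulMatrix B x i j = 0) : x ∈ Set.range (algebraMap k₀ k) := by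
  have hxj : x * B j = algebraMap k₀ k (leftMulMatrix B x j j) * B j := by
    rw [← Algebra.smul_def, ← B.sum_repr (x * B j), Finset.sum_eq_single j]
    · rw [leftMulMatrix_eq_repr_mul]
    · intro i _ hi
      rw [← leftMulMatrix_eq_repr_mul, hx i hi, zero_smul]
    · simp
  exact ⟨_, (mul_right_cancel₀ (B.ne_zero j) hxj).symm⟩

end Algebra

namespace Matrix.GeneralLinearGroup

variable {n R : Type*} [Fintype n] [DecidableEq n] [CommRing R]

theorem inv_mul_mulVec_eq_of_mulVec_eq {g h : GL n R} {v : n → R}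
    (hgh : (g : Matrix n n R) *ᵥ v = (h : Matrix n n R) *ᵥ v) :
    ((g⁻¹ * h : GL n R) : Matrix n n R) *ᵥ v = v := by
  rw [Units.val_mul, ← mulVec_mulVec, ← hgh, mulVec_mulVec, ← Units.val_mul, inv_mul_cancel,
    Units.val_one, one_mulVec]

theorem col_ne_zero [Nontrivial R] (g : GL n R) (j : n) : (g : Matrix n n R).col j ≠ 0 := by
  rw [← mulVec_single_one, Ne, ← mulVec_zero (g : Matrix n n R),
    (mulVec_injective_of_isUnit g.isUnit).eq_iff]
  simp

theorem apply_eq_zero_of_mk_center_eq {g h : GL n R}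
    (hgh : QuotientGroup.mk' (Subgroup.center (GL n R)) g =
      QuotientGroup.mk' (Subgroup.center (GL n R)) h) {i j : n}
    (hij : (h : Matrix n n R) i j = 0) : (g : Matrix n n R) i j = 0 := by
  obtain ⟨z, hz, rfl⟩ := (QuotientGroup.mk'_eq_mk' _).mp hgh.symm
  obtain ⟨r, hr⟩ := mem_center_iff_val_mem_range_scalar.mp hz
  simp [← hr, hij]

theorem mk_center_eq_one_of_val_eq_scalar {g : GL n R} {r : R}
    (hg : (g : Matrix n n R) = Matrix.scalar n r) :
    QuotientGroup.mk' (Subgroup.center (GL n R)) g = 1 :=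
  (QuotientGroup.eq_one_iff g).mpr (mem_center_iff_val_mem_range_scalar.mpr ⟨r, hg.symm⟩)

end Matrix.GeneralLinearGroup

/-- for a quadratic extension `k/k₀`, embedding `T_k = k^×/k₀^×` into
`PGL₂(k₀)` via the regular representation `ρ` of `k^×` on `k ≅ k₀²`, and with `B̄` the
image of the lower triangular matrices, one has `PGL₂(k₀) = T_k · B̄` and
`T_k ∩ B̄ = 1`.  Here `PGL₂(k₀)` is realized as `GL₂(k₀)` modulo its center, with
projection `π`. -/
theorem stmt15 (k₀ k : Type*) [Field k₀] [Field k] [Algebra k₀ k]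
    (B : Module.Basis (Fin 2) k₀ k)
    (ρ : kˣ →* GL (Fin 2) k₀)
    (hρ : ∀ x : kˣ, ((ρ x : GL (Fin 2) k₀) : Matrix (Fin 2) (Fin 2) k₀) =
      Algebra.leftMulMatrix B (x : k)) :
    let π := QuotientGroup.mk' (Subgroup.center (GL (Fin 2) k₀))
    (∀ g : GL (Fin 2) k₀, ∃ (x : kˣ) (b : GL (Fin 2) k₀),
      (b : Matrix (Fin 2) (Fin 2) k₀) 0 1 = 0 ∧ π g = π (ρ x) * π b) ∧
    ∀ (x : kˣ) (b : GL (Fin 2) k₀), (b : Matrix (Fin 2) (Fin 2) k₀) 0 1 = 0 →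
      π (ρ x) = π b → π (ρ x) = 1 := by
  intro π
  refine ⟨fun g => ?_, fun x b hb hxb => ?_⟩
  · obtain ⟨x, hx⟩ := Algebra.exists_leftMulMatrix_col_eq B (g.col_ne_zero 1) 1
    have hb := GeneralLinearGroup.inv_mul_mulVec_eq_of_mulVec_eq (g := ρ x) (h := g)
      (v := Pi.single 1 1) (by rw [mulVec_single_one, mulVec_single_one, hρ, hx])
    refine ⟨x, (ρ x)⁻¹ * g, ?_, by simp [π]⟩
    simpa using congrFun hb 0
  · have h01 : Algebra.leftMulMatrix B (x : k) 0 1 = 0 :=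
      hρ x ▸ GeneralLinearGroup.apply_eq_zero_of_mk_center_eq hxb hb
    obtain ⟨c, hc⟩ := Algebra.mem_range_algebraMap_of_leftMulMatrix_eq_zero B (j := 1)
      fun i hi => by rwa [show i = 0 by omega]
    refine GeneralLinearGroup.mk_center_eq_one_of_val_eq_scalar (r := c) ?_
    rw [hρ, ← hc, AlgHom.commutes]
    rfl
end
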